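/- arXiv:math/0508552 — 4 statements merged into one kernel-verified Lean document; each statement's English description precedes it below -/
import Mathlib

section
/- Let S be a unital semigroup with unit u, ω a weight on S, and let Ω(g,h) = ω(gh)/(ω(g)ω(h)). Suppose K > 0 and B ⊆ S is a set such that every g ∈ B has a right inverse g⁻¹ (gg⁻¹ = u) with ω(g)ω(g⁻¹) ≤ K. Then for every g ∈ B and h ∈ S, Ω(h,g) ≥ 1/K. -/
/-- If every `g ∈ B` has a right inverse `inv g` with `ω g * ω (inv g) ≤ K`,
then `Ω (h, g) = ω (h * g) / (ω h * ω g) ≥ 1 / K` for all `g ∈ B`, `h ∈ S`. -/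
theorem stmt6 {S : Type*} [Monoid S] (ω : S → ℝ)
    (hpos : ∀ s, 0 < ω s) (hsub : ∀ s t, ω (s * t) ≤ ω s * ω t)
    (hone : ω 1 = 1) (K : ℝ) (hK : 0 < K) (B : Set S) (inv : S → S)
    (hinv : ∀ g ∈ B, g * inv g = 1 ∧ ω g * ω (inv g) ≤ K) :
    ∀ g ∈ B, ∀ h : S, K⁻¹ ≤ ω (h * g) / (ω h * ω g) := by
  intro g hg h
  obtain ⟨hgi, hKg⟩ := hinv g hg
  have h1 : ω h ≤ ω (h * g) * ω (inv g) := by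
    calc ω h = ω (h * g * inv g) := by rw [mul_assoc, hgi, mul_one]
    _ ≤ ω (h * g) * ω (inv g) := hsub _ _
  have h2 : ω h * ω g ≤ ω (h * g) * K := by
    calc ω h * ω g ≤ ω (h * g) * ω (inv g) * ω g :=
          mul_le_mul_of_nonneg_right h1 (hpos g).le
    _ = ω (h * g) * (ω g * ω (inv g)) := by ring
    _ ≤ ω (h * g) * K := mul_le_mul_of_nonneg_left hKg (hpos _).le
  rw [le_div_iff₀ (mul_pos (hpos h) (hpos g))]
  rw [inv_mul_eq_div, div_le_iff₀ hK]
  linarith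
end

section
/- Let A be a unital dual Banach algebra with predual A_* and unit e, and identify (A ⊗̂ A)' with B(A, A'). If T ∈ σWC(B(A,A')) (i.e., the orbit maps a ↦ a·T and a ↦ T·a are σ(A,A_*)-to-weak continuous), then T(A) ⊆ κ_{A_*}(A_*) and T'(κ_A(A)) ⊆ κ_{A_*}(A_*). -/
namespace NormedSpace

/-- The topological dual of a seminormed space `E` (the Mathlib definition of December 2024,
since removed in favour of `StrongDual`). -/
abbrev Dual (𝕜 : Type*) [NontriviallyNormedField 𝕜] (E : Type*) [SeminormedAddCommGroup E]
    [NormedSpace 𝕜 E] : Type _ :=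
  E →L[𝕜] 𝕜

end NormedSpace

open NormedSpace

set_option synthInstance.maxHeartbeats 1000000
set_option maxHeartbeats 1000000

noncomputable section

/-- The Banach-space adjoint `T' : F' → E'` of `T : E → F`. -/
def adjOp {E F : Type*} [NormedAddCommGroup E] [NormedSpace ℂ E]
    [NormedAddCommGroup F] [NormedSpace ℂ F] (T : E →L[ℂ] F) :
    Dual ℂ F →L[ℂ] Dual ℂ E :=
  (ContinuousLinearMap.compL ℂ E F ℂ).flip T

/-- The weak topology `σ(E, p)` determined by a subspace `p ⊆ E'`. -/
def weakTop {E : Type*} [NormedAddCommGroup E] [NormedSpace ℂ E]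
    (p : Submodule ℂ (Dual ℂ E)) : TopologicalSpace E :=
  ⨅ φ : p, TopologicalSpace.induced (fun x => (φ : Dual ℂ E) x) inferInstance

/-- The canonical map `E → p'` for a subspace `p ⊆ E'`. -/
def predualMap {E : Type*} [NormedAddCommGroup E] [NormedSpace ℂ E]
    (p : Submodule ℂ (Dual ℂ E)) : E →L[ℂ] Dual ℂ p :=
  (adjOp (E := p) (F := Dual ℂ E) p.subtypeL).comp (inclusionInDoubleDual ℂ E)

/-- `p` is a predual of `E` when the canonical map `E → p'` is an isomorphism. -/
def IsPredual {E : Type*} [NormedAddCommGroup E] [NormedSpace ℂ E]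
    (p : Submodule ℂ (Dual ℂ E)) : Prop :=
  Function.Bijective (predualMap p)

/-- The identity map of `E`, viewed as taking values in `E` with its weak topology. -/
def toWeak {E : Type*} [NormedAddCommGroup E] [NormedSpace ℂ E] : E → WeakSpace ℂ E :=
  fun x => x

/-- Left multiplication `b ↦ a * b` as a continuous linear map. -/
def lmul {A : Type*} [NormedRing A] [NormedAlgebra ℂ A] (a : A) : A →L[ℂ] A :=
  ContinuousLinearMap.mul ℂ A a

/-- Right multiplication `b ↦ b * a` as a continuous linear map. -/
def rmul {A : Type*} [NormedRing A] [NormedAlgebra ℂ A] (a : A) : A →L[ℂ] A :=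
  (ContinuousLinearMap.mul ℂ A).flip a

/-- `T ∈ σWC(B(A,A'))`: both orbit maps `a ↦ a·T = T ∘ rmul a` and
`a ↦ T·a = (lmul a)' ∘ T` are `σ(A,Ap)`-to-weak continuous. -/
def SWC {A : Type*} [NormedRing A] [NormedAlgebra ℂ A]
    (Ap : Submodule ℂ (Dual ℂ A)) : Set (A →L[ℂ] Dual ℂ A) :=
  {T | @Continuous A (WeakSpace ℂ (A →L[ℂ] Dual ℂ A)) (weakTop Ap) _
        (fun a => toWeak (T.comp (rmul a))) ∧
      @Continuous A (WeakSpace ℂ (A →L[ℂ] Dual ℂ A)) (weakTop Ap) _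
        (fun a => toWeak ((adjOp (lmul a)).comp T))}

/-! Evaluating the orbit map `x ↦ T·x` at `(a, 1)` gives `x ↦ T a x`, and evaluating `x ↦ x·T`
at `(1, a)` gives `x ↦ T x a = T'(κ a) x`; so both functionals are `σ(A, Ap)`-continuous. A
functional continuous for the weak topology induced by `p ⊆ E'` is a finite linear combination of
elements of `p`, hence lies in `p`. -/

open scoped Topology

lemma mem_of_continuous_weakTop {E : Type*} [NormedAddCommGroup E] [NormedSpace ℂ E]
    (p : Submodule ℂ (Dual ℂ E)) {f : Dual ℂ E} (hf : Continuous[weakTop p, _] f) : f ∈ p := by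
  have hspan := (LinearMap.mem_span_iff_continuous
    (f := fun φ : p => ((φ : Dual ℂ E) : E →ₗ[ℂ] ℂ)) (f : E →ₗ[ℂ] ℂ)).2 hf
  have hrange : Set.range (fun φ : p => ((φ : Dual ℂ E) : E →ₗ[ℂ] ℂ)) =
      ContinuousLinearMap.coeLM ℂ '' (p : Set (Dual ℂ E)) := by
    ext; simp
  rw [hrange, Submodule.span_image, Submodule.span_eq] at hspan
  obtain ⟨g, hg, hgf⟩ := hspan
  rwa [← ContinuousLinearMap.coe_injective hgf]

lemma continuous_apply_apply_of_continuous_toWeak {X E F : Type*} {t : TopologicalSpace X}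
    [NormedAddCommGroup E] [NormedSpace ℂ E] [NormedAddCommGroup F] [NormedSpace ℂ F]
    {g : X → E →L[ℂ] Dual ℂ F} (hg : Continuous[t, _] fun x => toWeak (g x)) (a : E) (b : F) :
    Continuous[t, _] fun x => g x a b :=
  (WeakBilin.eval_continuous _
    ((ContinuousLinearMap.apply ℂ ℂ b).comp (ContinuousLinearMap.apply ℂ (Dual ℂ F) a))).comp hg

section OrbitMaps

variable {A : Type*} [NormedRing A] [NormedAlgebra ℂ A] (T : A →L[ℂ] Dual ℂ A) (a x : A)

lemma adjOp_lmul_comp_apply_one : (adjOp (lmul x)).comp T a 1 = T a x := by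
  simp [adjOp, lmul]

lemma comp_rmul_apply_one : T.comp (rmul x) 1 a = adjOp T (inclusionInDoubleDual ℂ A a) x := by
  simp [adjOp, rmul]

end OrbitMaps

theorem stmt14_general {A : Type*} [NormedRing A] [NormedAlgebra ℂ A]
    (Ap : Submodule ℂ (Dual ℂ A)) (T : A →L[ℂ] Dual ℂ A) (hT : T ∈ SWC Ap) :
    (∀ a : A, T a ∈ Ap) ∧
    (∀ a : A, adjOp T (inclusionInDoubleDual ℂ A a) ∈ Ap) := by
  refine ⟨fun a => mem_of_continuous_weakTop Ap ?_, fun a => mem_of_continuous_weakTop Ap ?_⟩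
  · simpa only [adjOp_lmul_comp_apply_one] using
      continuous_apply_apply_of_continuous_toWeak hT.2 a 1
  · simpa only [comp_rmul_apply_one] using continuous_apply_apply_of_continuous_toWeak hT.1 1 a

/-- Let `A` be a unital dual Banach algebra with predual `Ap ⊆ A'` (a closed submodule
with `A ≅ (Ap)'`).  If `T ∈ σWC(B(A,A'))` then `T(A)` and `T'(κ_A(A))` are contained in
(the canonical copy of) `Ap`. -/
theorem stmt14 {A : Type*} [NormedRing A] [NormedAlgebra ℂ A] [CompleteSpace A]
    (Ap : Submodule ℂ (Dual ℂ A)) (hc : IsClosed (Ap : Set (Dual ℂ A)))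
    (hsub : ∀ μ ∈ Ap, ∀ a : A, μ.comp (lmul a) ∈ Ap ∧ μ.comp (rmul a) ∈ Ap)
    (hp : IsPredual Ap) (T : A →L[ℂ] Dual ℂ A) (hT : T ∈ SWC Ap) :
    (∀ a : A, T a ∈ Ap) ∧
    (∀ a : A, adjOp T (inclusionInDoubleDual ℂ A a) ∈ Ap) :=
  stmt14_general Ap T hT
end
end

section
/- Let G be a discrete group with identity e, let ω be a weight on G, and suppose N ∈ l∞(G)' witnesses ω-amenability of G (⟨N, (Ω(g,g⁻¹))_g⟩ = 1 and J_h'(N) = N for all h). Define ψ : l∞(G×G) → l∞(G) by ⟨ψ(F), δ_g⟩ = F(g, g⁻¹), and let M = ψ'(N). Then ⟨M, (f_{gh} Ω(g,h))_{(g,h)}⟩ = f_e for every bounded family (f_g)_{g∈G}. -/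
open NormedSpace

noncomputable section

instance factOneLeTop : Fact ((1 : ENNReal) ≤ ⊤) := ⟨le_top⟩

/-
Since `g g⁻¹ = 1`, the family `ψ((f_{gh} Ω(g,h))_{(g,h)})` is `f 1` times `(Ω(g,g⁻¹))_g`, on which
`N` takes the value `1`. The only point is that `(Ω(g,g⁻¹))_g` lies in `l∞(G)`: submultiplicativity
gives `ω g ω g⁻¹ ≥ ω 1 = 1`, so `Ω(g,g⁻¹) = 1 / (ω g ω g⁻¹) ∈ (0, 1]`.
-/

section Weight

variable {G : Type*} [Group G] {ω : G → ℝ}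

lemma one_le_mul_apply_inv (hsub : ∀ g h, ω (g * h) ≤ ω g * ω h) (hone : ω 1 = 1) (g : G) :
    1 ≤ ω g * ω g⁻¹ := by
  simpa [hone] using hsub g g⁻¹

lemma norm_weightRatio_inv_le_one (hsub : ∀ g h, ω (g * h) ≤ ω g * ω h) (hone : ω 1 = 1)
    (g : G) : ‖((ω (g * g⁻¹) / (ω g * ω g⁻¹) : ℝ) : ℂ)‖ ≤ 1 := by
  have hprod := one_le_mul_apply_inv hsub hone g
  rw [Complex.norm_real, mul_inv_cancel, hone, Real.norm_eq_abs,
    abs_of_pos (one_div_pos.mpr (by linarith))]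
  exact div_le_one_of_le₀ hprod (by linarith)

lemma memℓp_weightRatio_inv (hsub : ∀ g h, ω (g * h) ≤ ω g * ω h) (hone : ω 1 = 1) :
    Memℓp (fun g : G => ((ω (g * g⁻¹) / (ω g * ω g⁻¹) : ℝ) : ℂ)) ⊤ :=
  memℓp_infty ⟨1, by
    rintro _ ⟨g, rfl⟩
    exact norm_weightRatio_inv_le_one hsub hone g⟩

end Weight

theorem stmt16_general {G : Type*} [Group G] (ω : G → ℝ)
    (hsub : ∀ g h, ω (g * h) ≤ ω g * ω h) (hone : ω 1 = 1)
    (N : StrongDual ℂ (lp (fun _ : G => ℂ) ⊤))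
    (hN1 : ∀ F : lp (fun _ : G => ℂ) ⊤,
      (∀ g : G, F g = ((ω (g * g⁻¹) / (ω g * ω g⁻¹) : ℝ) : ℂ)) → N F = 1) :
    ∀ f : G → ℂ, (∃ C : ℝ, ∀ g, ‖f g‖ ≤ C) →
      ∀ Fψ : lp (fun _ : G => ℂ) ⊤,
        (∀ g : G, Fψ g = f (g * g⁻¹) * ((ω (g * g⁻¹) / (ω g * ω g⁻¹) : ℝ) : ℂ)) →
        N Fψ = f 1 := by
  intro f _ Fψ hFψ
  let Ω₀ : lp (fun _ : G => ℂ) ⊤ := ⟨_, memℓp_weightRatio_inv hsub hone⟩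
  have hFψ_eq : Fψ = f 1 • Ω₀ := by
    ext g
    simp [hFψ g, Ω₀]
  rw [hFψ_eq, map_smul, hN1 Ω₀ fun _ => rfl, smul_eq_mul, mul_one]

/-- Let `G` be a discrete group with weight `ω`, `Ω (g,h) = ω (g h)/(ω g ω h)`, and let
`N ∈ l∞(G)'` witness `ω`-amenability: `⟨N, (Ω (g,g⁻¹))_g⟩ = 1` (hypothesis `hN1`) and
`J_h'(N) = N` for all `h` (hypothesis `hN2`, where
`J_h(f)_g = f_{h g} Ω (h,g) ω h Ω (g⁻¹,h⁻¹) ω h⁻¹`).  With `ψ : l∞(G×G) → l∞(G)`,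
`ψ(F)_g = F (g, g⁻¹)`, and `M = ψ'(N)`, we have
`⟨M, (f_{g h} Ω (g,h))_{(g,h)}⟩ = f_1` for every bounded family `(f_g)`; here the element
`(ψ ((f_{g h} Ω (g,h))_{(g,h)}))_g = f (g g⁻¹) Ω (g,g⁻¹)` is the `Fψ` below. -/
theorem stmt16 {G : Type*} [Group G] (ω : G → ℝ)
    (hpos : ∀ g, 0 < ω g) (hsub : ∀ g h, ω (g * h) ≤ ω g * ω h) (hone : ω 1 = 1)
    (N : StrongDual ℂ (lp (fun _ : G => ℂ) ⊤))
    (hN1 : ∀ F : lp (fun _ : G => ℂ) ⊤,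
      (∀ g : G, F g = ((ω (g * g⁻¹) / (ω g * ω g⁻¹) : ℝ) : ℂ)) → N F = 1)
    (hN2 : ∀ h : G, ∀ F F' : lp (fun _ : G => ℂ) ⊤,
      (∀ g : G, F' g = F (h * g) *
        ((ω (h * g) / (ω h * ω g) * ω h * (ω (g⁻¹ * h⁻¹) / (ω g⁻¹ * ω h⁻¹)) * ω h⁻¹ : ℝ) : ℂ)) →
      N F' = N F) :
    ∀ f : G → ℂ, (∃ C : ℝ, ∀ g, ‖f g‖ ≤ C) →
      ∀ Fψ : lp (fun _ : G => ℂ) ⊤,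
        (∀ g : G, Fψ g = f (g * g⁻¹) * ((ω (g * g⁻¹) / (ω g * ω g⁻¹) : ℝ) : ℂ)) →
        N Fψ = f 1 :=
  stmt16_general ω hsub hone N hN1
end
end

section
/- Let ω(n) = 1 + |n| on ℤ. Then for any sequences (g_j), (h_k) of distinct integers, the iterated limit lim_j lim_k Ω(g_j, h_k) is 0 whenever it exists, where Ω(m,n) = (1+|m+n|)/((1+|m|)(1+|n|)). (This is the condition from the Craw–Young criterion implying l¹(ℤ,ω) is Arens regular.) -/
open Filter Topology

lemma abs_cast_tendsto (f : ℕ → ℤ) (hf : Function.Injective f) :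
    Tendsto (fun k => |(f k : ℝ)|) atTop atTop := by
  have h1 : Tendsto f atTop cofinite := by
    rw [← Nat.cofinite_eq_atTop]
    exact hf.tendsto_cofinite
  have h2 : Tendsto (fun n : ℤ => |(n : ℝ)|) cofinite atTop := by
    rw [Int.cofinite_eq, tendsto_sup]
    constructor
    · exact tendsto_abs_atBot_atTop.comp (tendsto_intCast_atBot_iff.mpr tendsto_id)
    · exact tendsto_abs_atTop_atTop.comp tendsto_intCast_atTop_atTop
  exact h2.comp h1

lemma inner_lim (a : ℝ) (b : ℕ → ℝ) (hb : Tendsto (fun k => |b k|) atTop atTop) :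
    Tendsto (fun k => (1 + |a + b k|) / ((1 + |a|) * (1 + |b k|))) atTop
      (𝓝 (1 / (1 + |a|))) := by
  rw [← tendsto_sub_nhds_zero_iff]
  have hbound : ∀ k, ‖(1 + |a + b k|) / ((1 + |a|) * (1 + |b k|)) - 1 / (1 + |a|)‖
      ≤ |a| / ((1 + |a|) * (1 + |b k|)) := by
    intro k
    have hA : (0:ℝ) < 1 + |a| := by positivity
    have hB : (0:ℝ) < 1 + |b k| := by positivity
    have key : (1 + |a + b k|) / ((1 + |a|) * (1 + |b k|)) - 1 / (1 + |a|)
        = (|a + b k| - |b k|) / ((1 + |a|) * (1 + |b k|)) := by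
      field_simp
      ring
    rw [Real.norm_eq_abs, key, abs_div, abs_of_pos (mul_pos hA hB)]
    have hnum : |(|a + b k| - |b k|)| ≤ |a| := by
      calc |(|a + b k| - |b k|)| ≤ |a + b k - b k| := abs_abs_sub_abs_le_abs_sub _ _
        _ = |a| := by ring_nf
    gcongr
  have htend : Tendsto (fun k => |a| / ((1 + |a|) * (1 + |b k|))) atTop (𝓝 0) := by
    have hdenom : Tendsto (fun k => (1 + |a|) * (1 + |b k|)) atTop atTop := by
      apply Tendsto.const_mul_atTop (by positivity)
      exact tendsto_atTop_add_const_left _ _ hb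
    exact tendsto_const_nhds.div_atTop hdenom
  exact squeeze_zero_norm hbound htend

/-- For the weight `ω n = 1 + |n|` on `ℤ`: for injective sequences `(g j)`, `(h k)` of
integers, the iterated limit `lim_j lim_k Ω (g j, h k)` is `0` whenever it exists, where
`Ω (a, b) = (1 + |a + b|) / ((1 + |a|) (1 + |b|))`. -/
theorem stmt19 (g h : ℕ → ℤ) (hg : Function.Injective g) (hh : Function.Injective h)
    (l : ℕ → ℝ) (L : ℝ)
    (hinner : ∀ j, Tendsto
      (fun k => (1 + |(g j : ℝ) + (h k : ℝ)|) / ((1 + |(g j : ℝ)|) * (1 + |(h k : ℝ)|)))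
      atTop (𝓝 (l j)))
    (houter : Tendsto l atTop (𝓝 L)) :
    L = 0 := by
  have hb := abs_cast_tendsto h hh
  have hl : ∀ j, l j = 1 / (1 + |(g j : ℝ)|) := fun j =>
    tendsto_nhds_unique (hinner j) (inner_lim _ _ hb)
  have hg' := abs_cast_tendsto g hg
  have : Tendsto l atTop (𝓝 0) := by
    have h0 : Tendsto (fun j => 1 / (1 + |(g j : ℝ)|)) atTop (𝓝 0) :=
      tendsto_const_nhds.div_atTop (tendsto_atTop_add_const_left _ _ hg')
    exact h0.congr (fun j => (hl j).symm)
  exact tendsto_nhds_unique houter this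
end
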